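/- arXiv:1902.06820 — 2 statements merged into one kernel-verified Lean document; each statement's English description precedes it below -/
import Mathlib

section
/- There exist integrable functions E, φ : ℝ² × ℝ → ℝ, a flow v ∈ ℝ², and a point (x, t) such that ((L_v E) ⋆ φ)(x, t) ≠ (L_v(E ⋆ φ))(x, t); i.e., the shear L_v is not equivariant to 3D cross-correlation. -/
open MeasureTheory

noncomputable def shearAct (v : ℝ × ℝ) (E : (ℝ × ℝ) × ℝ → ℝ) : (ℝ × ℝ) × ℝ → ℝ :=
  fun p => E (p.1 + p.2 • v, p.2)

noncomputable def corr3 (E φ : (ℝ × ℝ) × ℝ → ℝ) (p : (ℝ × ℝ) × ℝ) : ℝ :=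
  ∫ q : (ℝ × ℝ) × ℝ, E q * φ (q.1 - p.1, q.2 - p.2)

/-!
At the origin the shear fixes the evaluation point, but the correlation integrates over all times
`τ`, and at `τ ≠ 0` the shear moves `E`. Take `E = φ = 1_S` for the box `S = [0,1]² × [1,2]` and
`v = (2,0)`: the correlation of `1_S` with itself at the origin is `vol S = 1`, while the sheared
box `shearMap v ⁻¹' S` is disjoint from `S`, so the correlation of the sheared indicator with `1_S`
vanishes.
-/

def shearMap (v : ℝ × ℝ) (p : (ℝ × ℝ) × ℝ) : (ℝ × ℝ) × ℝ := (p.1 + p.2 • v, p.2)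

lemma measurable_shearMap (v : ℝ × ℝ) : Measurable (shearMap v) := by
  unfold shearMap
  fun_prop

lemma shearAct_indicator_one (v : ℝ × ℝ) (s : Set ((ℝ × ℝ) × ℝ)) :
    shearAct v (s.indicator 1) = (shearMap v ⁻¹' s).indicator 1 :=
  funext fun p => (Set.indicator_comp_right (shearMap v) (g := 1) (x := p)).symm

lemma corr3_indicator_one_zero {s t : Set ((ℝ × ℝ) × ℝ)} (hs : MeasurableSet s)
    (ht : MeasurableSet t) :
    corr3 (s.indicator 1) (t.indicator 1) 0 = volume.real (s ∩ t) := by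
  simp only [corr3, Prod.fst_zero, Prod.snd_zero, sub_zero, Prod.mk.eta]
  rw [← integral_indicator_one (hs.inter ht), Set.inter_indicator_one]
  rfl

def unitBox : Set ((ℝ × ℝ) × ℝ) := (Set.Icc 0 1 ×ˢ Set.Icc 0 1) ×ˢ Set.Icc 1 2

lemma measurableSet_unitBox : MeasurableSet unitBox :=
  (measurableSet_Icc.prod measurableSet_Icc).prod measurableSet_Icc

lemma volume_unitBox : volume unitBox = 1 := by
  rw [unitBox, Measure.volume_eq_prod, Measure.prod_prod, Measure.volume_eq_prod,
    Measure.prod_prod]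
  norm_num

lemma integrable_indicator_unitBox : Integrable (unitBox.indicator (1 : (ℝ × ℝ) × ℝ → ℝ)) :=
  (integrable_indicator_iff measurableSet_unitBox).2
    (integrableOn_const (C := (1 : ℝ)) (by simp [volume_unitBox]))

lemma disjoint_shearMap_preimage_unitBox : Disjoint (shearMap (2, 0) ⁻¹' unitBox) unitBox := by
  refine Set.disjoint_left.2 fun q hsheared hq => ?_
  have h : q.1.1 + q.2 * 2 ≤ 1 := by simpa [shearMap] using hsheared.1.1.2
  linarith [hq.1.1.1, hq.2.1]

/-- the shear is NOT equivariant to 3D cross-correlation. -/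
theorem shear_not_equivariant :
    ∃ (E φ : (ℝ × ℝ) × ℝ → ℝ) (v x : ℝ × ℝ) (t : ℝ),
      Integrable E ∧ Integrable φ ∧
      corr3 (shearAct v E) φ (x, t) ≠ corr3 E φ (x + t • v, t) := by
  refine ⟨unitBox.indicator 1, unitBox.indicator 1, (2, 0), 0, 0,
    integrable_indicator_unitBox, integrable_indicator_unitBox, ?_⟩
  have hsheared : corr3 (shearAct (2, 0) (unitBox.indicator 1)) (unitBox.indicator 1) 0 = 0 := by
    rw [shearAct_indicator_one, corr3_indicator_one_zero
      (measurableSet_unitBox.preimage (measurable_shearMap _)) measurableSet_unitBox,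
      disjoint_shearMap_preimage_unitBox.inter_eq, measureReal_empty]
  have hunsheared : corr3 (unitBox.indicator 1) (unitBox.indicator 1) 0 = 1 := by
    rw [corr3_indicator_one_zero measurableSet_unitBox measurableSet_unitBox, Set.inter_self,
      measureReal_def, volume_unitBox, ENNReal.toReal_one]
  simp [← Prod.zero_eq_mk, hsheared, hunsheared]
end

section
/- The 2D projection correlation of a sheared signal also fails equivariance: there exist integrable E, φ : ℝ² × ℝ → ℝ and v ∈ ℝ² such that the function x ↦ ∫∫ (L_v E)(ξ, t) φ(ξ − x, t) dξ dt is not a translate of x ↦ ∫∫ E(ξ, t) φ(ξ − x, t) dξ dt. -/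
open MeasureTheory

/-- 2D projection correlation of a 3D signal: `(E ⋆₂ φ)(x) = ∫∫ E(ξ,t) φ(ξ−x,t) dξ dt`. -/
noncomputable def corr2 (E φ : (ℝ × ℝ) × ℝ → ℝ) (x : ℝ × ℝ) : ℝ :=
  ∫ q : (ℝ × ℝ) × ℝ, E q * φ (q.1 - x, q.2)

/-!
Take `E = f ⊗ s` and `φ = f ⊗ c`, where `f` is the indicator of the unit square,
`s = 1_[0,1] - 1_[2,3]` and `c = 1_[0,3]`. For separable signals the correlation factors as a
spatial correlation times `∫ s c`, which vanishes here, so `E ⋆₂ φ ≡ 0` and so is every translate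
of it. Shearing by `v = (1, 0)` moves the square off itself at all times `t > 1`, which removes
exactly the negative part of `s`: the integrand of `(L_v E ⋆₂ φ)(0)` is nonnegative and equals `1`
on an open box, so this correlation is positive.
-/

open Set

theorem corr2_prod_mul (f g : ℝ × ℝ → ℝ) (s c : ℝ → ℝ) (x : ℝ × ℝ) :
    corr2 (fun q => f q.1 * s q.2) (fun q => g q.1 * c q.2) x
      = (∫ ξ, f ξ * g (ξ - x)) * ∫ t, s t * c t := by
  rw [corr2, ← integral_prod_mul (μ := volume) (ν := volume)]
  exact congr_arg _ (funext fun q => by ring)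

theorem integrable_indicator_one_of_isCompact {X : Type*} [TopologicalSpace X] [T2Space X]
    [MeasurableSpace X] [OpensMeasurableSpace X] {μ : Measure X} [IsFiniteMeasureOnCompacts μ]
    {K : Set X} (hK : IsCompact K) : Integrable (K.indicator (1 : X → ℝ)) μ :=
  (integrable_indicator_iff hK.measurableSet).2 (integrableOn_const hK.measure_lt_top.ne)

theorem Measurable.shearAct {E : (ℝ × ℝ) × ℝ → ℝ} (hE : Measurable E) (v : ℝ × ℝ) :
    Measurable (shearAct v E) :=
  hE.comp (by fun_prop)

theorem integrable_shearAct_mul {E φ : (ℝ × ℝ) × ℝ → ℝ} {C : ℝ} (hφ : Integrable φ)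
    (hE : Measurable E) (hEC : ∀ q, ‖E q‖ ≤ C) (v : ℝ × ℝ) :
    Integrable (fun q => shearAct v E q * φ q) :=
  hφ.bdd_mul (hE.shearAct v).aestronglyMeasurable (ae_of_all _ fun _ => hEC _)

theorem norm_indicator_one_le {X : Type*} (K : Set X) (x : X) :
    ‖K.indicator (1 : X → ℝ) x‖ ≤ 1 :=
  (norm_indicator_le_norm_self _ _).trans_eq norm_one

noncomputable def unitSquare : ℝ × ℝ → ℝ := (Icc (0 : ℝ) 1 ×ˢ Icc (0 : ℝ) 1).indicator 1

theorem unitSquare_nonneg (ξ : ℝ × ℝ) : 0 ≤ unitSquare ξ :=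
  indicator_nonneg (fun _ _ => zero_le_one) ξ

theorem integrable_unitSquare : Integrable unitSquare :=
  integrable_indicator_one_of_isCompact (isCompact_Icc.prod isCompact_Icc)

theorem unitSquare_shift_mul_eq_zero {t : ℝ} (ht : 1 < t) (ξ : ℝ × ℝ) :
    unitSquare (ξ + t • (1, 0)) * unitSquare ξ = 0 := by
  simp only [unitSquare, indicator_apply, mem_prod, mem_Icc, Prod.fst_add, Prod.smul_fst,
    smul_eq_mul, mul_one, Pi.one_apply]
  split_ifs <;> grind

noncomputable def signedPulse (t : ℝ) : ℝ :=
  (Icc (0 : ℝ) 1).indicator 1 t - (Icc (2 : ℝ) 3).indicator 1 t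

noncomputable def timeWindow : ℝ → ℝ := (Icc (0 : ℝ) 3).indicator 1

theorem signedPulse_mul_timeWindow (t : ℝ) : signedPulse t * timeWindow t = signedPulse t := by
  simp only [signedPulse, timeWindow, indicator_apply, mem_Icc, Pi.one_apply]
  split_ifs <;> grind

theorem integral_signedPulse : ∫ t, signedPulse t = 0 := by
  simp only [signedPulse]
  rw [integral_sub (integrable_indicator_one_of_isCompact isCompact_Icc)
    (integrable_indicator_one_of_isCompact isCompact_Icc), integral_indicator_one measurableSet_Icc,
    integral_indicator_one measurableSet_Icc, Real.volume_real_Icc, Real.volume_real_Icc]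
  norm_num

theorem norm_signedPulse_le (t : ℝ) : ‖signedPulse t‖ ≤ 1 := by
  simp only [signedPulse, indicator_apply, mem_Icc, Pi.one_apply]
  split_ifs <;> norm_num

theorem signedPulse_nonneg {t : ℝ} (ht : t ≤ 1) : 0 ≤ signedPulse t := by
  rw [signedPulse, indicator_of_notMem (fun h : t ∈ Icc 2 3 => by linarith [h.1]), sub_zero]
  exact indicator_nonneg (fun _ _ => zero_le_one) _

noncomputable def testSignal : (ℝ × ℝ) × ℝ → ℝ := fun q => unitSquare q.1 * signedPulse q.2

noncomputable def testFilter : (ℝ × ℝ) × ℝ → ℝ := fun q => unitSquare q.1 * timeWindow q.2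

theorem measurable_testSignal : Measurable testSignal :=
  ((measurable_const.indicator (measurableSet_Icc.prod measurableSet_Icc)).comp measurable_fst).mul
    (((measurable_const.indicator measurableSet_Icc).sub
      (measurable_const.indicator measurableSet_Icc)).comp measurable_snd)

theorem norm_testSignal_le (q : (ℝ × ℝ) × ℝ) : ‖testSignal q‖ ≤ 1 := by
  rw [testSignal, norm_mul]
  exact mul_le_one₀ (norm_indicator_one_le _ _) (norm_nonneg _) (norm_signedPulse_le _)

theorem integrable_testSignal : Integrable testSignal :=
  integrable_unitSquare.mul_prod <|
    (integrable_indicator_one_of_isCompact isCompact_Icc).sub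
      (integrable_indicator_one_of_isCompact isCompact_Icc)

theorem integrable_testFilter : Integrable testFilter :=
  integrable_unitSquare.mul_prod (integrable_indicator_one_of_isCompact isCompact_Icc)

theorem corr2_testSignal_testFilter (x : ℝ × ℝ) : corr2 testSignal testFilter x = 0 := by
  unfold testSignal testFilter
  rw [corr2_prod_mul]
  simp only [signedPulse_mul_timeWindow, integral_signedPulse, mul_zero]

theorem shear_testSignal_mul_testFilter (ξ : ℝ × ℝ) (t : ℝ) :
    shearAct (1, 0) testSignal (ξ, t) * testFilter (ξ, t)
      = unitSquare (ξ + t • (1, 0)) * unitSquare ξ * signedPulse t := by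
  rw [← signedPulse_mul_timeWindow]
  simp only [shearAct, testSignal, testFilter]
  ring

theorem shear_testSignal_mul_testFilter_nonneg (q : (ℝ × ℝ) × ℝ) :
    0 ≤ shearAct (1, 0) testSignal q * testFilter q := by
  obtain ⟨ξ, t⟩ := q
  rw [shear_testSignal_mul_testFilter]
  rcases le_or_gt t 1 with ht | ht
  · exact mul_nonneg (mul_nonneg (unitSquare_nonneg _) (unitSquare_nonneg _))
      (signedPulse_nonneg ht)
  · rw [unitSquare_shift_mul_eq_zero ht, zero_mul]

theorem corr2_shear_testSignal_pos : 0 < corr2 (shearAct (1, 0) testSignal) testFilter 0 := by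
  simp only [corr2, sub_zero, Prod.mk.eta]
  rw [integral_pos_iff_support_of_nonneg shear_testSignal_mul_testFilter_nonneg
    (integrable_shearAct_mul integrable_testFilter measurable_testSignal norm_testSignal_le _)]
  let B : Set ((ℝ × ℝ) × ℝ) := (Ioo 0 (1 / 2) ×ˢ Ioo 0 1) ×ˢ Ioo 0 (1 / 2)
  have hB : 0 < volume B :=
    ((isOpen_Ioo.prod isOpen_Ioo).prod isOpen_Ioo).measure_pos volume
      ⟨((1 / 4, 1 / 2), 1 / 4), by norm_num [B]⟩
  refine hB.trans_le (measure_mono fun ⟨ξ, t⟩ hq => ?_)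
  obtain ⟨⟨⟨h1, h1'⟩, h2, h2'⟩, h3, h3'⟩ := hq
  rw [Function.mem_support, shear_testSignal_mul_testFilter]
  simp only [unitSquare, signedPulse, indicator_apply, mem_prod, mem_Icc, Prod.fst_add,
    Prod.snd_add, Prod.smul_fst, Prod.smul_snd, smul_eq_mul, Pi.one_apply]
  split_ifs <;> grind

/-- the 2D projection correlation of a sheared signal need not be
a translate of the 2D projection correlation of the original signal. -/
theorem corr2_shear_not_translate :
    ∃ (E φ : (ℝ × ℝ) × ℝ → ℝ) (v : ℝ × ℝ),
      Integrable E ∧ Integrable φ ∧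
      ¬ ∃ w : ℝ × ℝ, ∀ x : ℝ × ℝ, corr2 (shearAct v E) φ x = corr2 E φ (x + w) := by
  refine ⟨testSignal, testFilter, (1, 0), integrable_testSignal, integrable_testFilter, ?_⟩
  rintro ⟨w, hw⟩
  have h0 := hw 0
  rw [corr2_testSignal_testFilter] at h0
  exact corr2_shear_testSignal_pos.ne' h0
end
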